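/- arXiv:math/0402071 — 4 statements merged into one kernel-verified Lean document; each statement's English description precedes it below -/
import Mathlib

section
/- (Lemma 4.5) Let ρ be a face of ℕA and let α ∈ ℕρ be such that α ∉ ℕσ for every face σ of ℕA with σ ⊊ ρ (i.e., α lies on no proper face of ρ). Let β ∈ ℤ^d and let μ be a face of ℕA. If there exists M ∈ ℕ such that β − m·α ∈ ℕA + ℤμ for all integers m ≥ M, then ρ ⊆ μ. -/
/-- The semigroup `ℕA`: the additive submonoid of `ℤ^d` generated by the
columns `a 1, …, a n` of the matrix `A`. -/
def semigroupNA (d n : ℕ) (a : Fin n → (Fin d → ℤ)) : AddSubmonoid (Fin d → ℤ) :=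
  AddSubmonoid.closure (Set.range a)

/-- The submonoid `ℕτ` of `ℤ^d` generated by the columns `a i` for `i ∈ τ`. -/
def monoidNface (d n : ℕ) (a : Fin n → (Fin d → ℤ)) (τ : Set (Fin n)) :
    AddSubmonoid (Fin d → ℤ) :=
  AddSubmonoid.closure (a '' τ)

/-- The subgroup `ℤτ` of `ℤ^d` generated by the columns `a i` for `i ∈ τ`. -/
def groupZface (d n : ℕ) (a : Fin n → (Fin d → ℤ)) (τ : Set (Fin n)) :
    AddSubgroup (Fin d → ℤ) :=
  AddSubgroup.closure (a '' τ)

/-- The set `ℕA + ℤτ = {u + v : u ∈ ℕA, v ∈ ℤτ}`. -/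
def NAplusZ (d n : ℕ) (a : Fin n → (Fin d → ℤ)) (τ : Set (Fin n)) :
    Set (Fin d → ℤ) :=
  {x | ∃ u ∈ semigroupNA d n a, ∃ v ∈ groupZface d n a τ, x = u + v}

/-- `τ ⊆ {1,…,n}` is a face of `ℕA` if there is a `ℤ`-linear functional `f` on `ℤ^d`
that is nonnegative on all columns of `A` and `τ = {i : f (a i) = 0}`. -/
def IsFace (d n : ℕ) (a : Fin n → (Fin d → ℤ)) (τ : Set (Fin n)) : Prop :=
  ∃ f : (Fin d → ℤ) →ₗ[ℤ] ℤ, (∀ i, 0 ≤ f (a i)) ∧ τ = {i | f (a i) = 0}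

/-!
Let `f` be a functional cutting out `μ`. Then `f ≥ 0` on `ℕA` and `f = 0` on `ℤμ`, so
`f β - m f α = f (β - m α) ≥ 0` for all large `m`, forcing `f α ≤ 0`. Since `α ∈ ℕρ` and `f` is
nonnegative on the generators, `f α = 0` means `α` is a sum of generators `a i` with `i ∈ ρ ∩ μ`.
But `ρ ∩ μ` is a face (cut out by the sum of the two functionals), so by the hypothesis on `α`
it is not a proper subset of `ρ`, i.e. `ρ ⊆ μ`.
-/

section OrderedHom

variable {M N F : Type*} [AddCommMonoid M] [AddCommMonoid N] [PartialOrder N]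
  [IsOrderedAddMonoid N] [FunLike F M N] [AddMonoidHomClass F M N]

theorem AddSubmonoid.apply_nonneg_of_mem_closure (f : F) {s : Set M} (hs : ∀ x ∈ s, 0 ≤ f x)
    {x : M} (hx : x ∈ AddSubmonoid.closure s) : 0 ≤ f x := by
  induction hx using AddSubmonoid.closure_induction with
  | mem y hy => exact hs y hy
  | zero => simp
  | add y z _ _ hy hz => rw [map_add]; exact add_nonneg hy hz

theorem AddSubmonoid.mem_closure_inter_of_apply_eq_zero (f : F) {s : Set M}
    (hs : ∀ x ∈ s, 0 ≤ f x) {x : M} (hx : x ∈ AddSubmonoid.closure s) (hfx : f x = 0) :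
    x ∈ AddSubmonoid.closure (s ∩ {y | f y = 0}) := by
  induction hx using AddSubmonoid.closure_induction with
  | mem y hy => exact AddSubmonoid.subset_closure ⟨hy, hfx⟩
  | zero => exact zero_mem _
  | add y z hy hz ihy ihz =>
    rw [map_add, add_eq_zero_iff_of_nonneg (apply_nonneg_of_mem_closure f hs hy)
      (apply_nonneg_of_mem_closure f hs hz)] at hfx
    exact add_mem (ihy hfx.1) (ihz hfx.2)

end OrderedHom

theorem AddSubgroup.apply_eq_zero_of_mem_closure {G N F : Type*} [AddGroup G] [AddGroup N]
    [FunLike F G N] [AddMonoidHomClass F G N] (f : F) {s : Set G} (hs : ∀ x ∈ s, f x = 0)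
    {x : G} (hx : x ∈ AddSubgroup.closure s) : f x = 0 :=
  (AddSubgroup.closure_le (AddMonoidHom.ker (f : G →+ N))).mpr hs hx

theorem Int.nonpos_of_forall_mul_le {M b c : ℤ} (h : ∀ m, M ≤ m → m * c ≤ b) : c ≤ 0 := by
  by_contra! hc
  set m := max (max M b) 0 + 1
  have hmb : b < m := by omega
  have hm : m ≤ m * c := le_mul_of_one_le_right (by omega) hc
  have := h m (by omega)
  omega

section Faces

variable {d n : ℕ} {a : Fin n → (Fin d → ℤ)}

theorem IsFace.inter {ρ μ : Set (Fin n)} (hρ : IsFace d n a ρ) (hμ : IsFace d n a μ) :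
    IsFace d n a (ρ ∩ μ) := by
  obtain ⟨g, hg0, rfl⟩ := hρ
  obtain ⟨f, hf0, rfl⟩ := hμ
  refine ⟨g + f, fun i => add_nonneg (hg0 i) (hf0 i), ?_⟩
  ext i
  have := hg0 i
  have := hf0 i
  simp only [Set.mem_inter_iff, Set.mem_ofPred_eq, LinearMap.add_apply]
  omega

variable (f : (Fin d → ℤ) →ₗ[ℤ] ℤ) (hf0 : ∀ i, 0 ≤ f (a i))
include hf0

theorem apply_nonneg_of_mem_monoidNface {τ : Set (Fin n)} {x : Fin d → ℤ}
    (hx : x ∈ monoidNface d n a τ) : 0 ≤ f x :=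
  AddSubmonoid.apply_nonneg_of_mem_closure f (by rintro _ ⟨i, -, rfl⟩; exact hf0 i) hx

theorem mem_monoidNface_inter_of_apply_eq_zero {τ : Set (Fin n)} {x : Fin d → ℤ}
    (hx : x ∈ monoidNface d n a τ) (hfx : f x = 0) :
    x ∈ monoidNface d n a (τ ∩ {i | f (a i) = 0}) := by
  refine AddSubmonoid.closure_mono ?_
    (AddSubmonoid.mem_closure_inter_of_apply_eq_zero f ?_ hx hfx)
  · rintro _ ⟨⟨i, hi, rfl⟩, hfi⟩
    exact ⟨i, ⟨hi, hfi⟩, rfl⟩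
  · rintro _ ⟨i, -, rfl⟩
    exact hf0 i

theorem apply_nonpos_of_eventually_mem_NAplusZ {α β : Fin d → ℤ}
    (h : ∃ M : ℕ, ∀ m : ℤ, (M : ℤ) ≤ m → β - m • α ∈ NAplusZ d n a {i | f (a i) = 0}) :
    f α ≤ 0 := by
  obtain ⟨M, hM⟩ := h
  refine Int.nonpos_of_forall_mul_le (M := M) (b := f β) fun m hm => ?_
  obtain ⟨u, hu, v, hv, huv⟩ := hM m hm
  have hfu : 0 ≤ f u :=
    AddSubmonoid.apply_nonneg_of_mem_closure f (by rintro _ ⟨i, rfl⟩; exact hf0 i) hu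
  have hfv : f v = 0 :=
    AddSubgroup.apply_eq_zero_of_mem_closure f (by rintro _ ⟨i, hi, rfl⟩; exact hi) hv
  have hfβ : f β - m * f α = f u + f v := by
    rw [← smul_eq_mul, ← map_zsmul, ← map_sub, huv, map_add]
  omega

end Faces

theorem face_subset_of_eventually_mem_general
    (d n : ℕ) (a : Fin n → (Fin d → ℤ))
    (ρ : Set (Fin n)) (hρ : IsFace d n a ρ)
    (α : Fin d → ℤ) (hα : α ∈ monoidNface d n a ρ)
    (hint : ∀ σ : Set (Fin n), IsFace d n a σ → σ ⊂ ρ → α ∉ monoidNface d n a σ)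
    (β : Fin d → ℤ) (μ : Set (Fin n)) (hμ : IsFace d n a μ)
    (h : ∃ M : ℕ, ∀ m : ℤ, (M : ℤ) ≤ m → β - m • α ∈ NAplusZ d n a μ) :
    ρ ⊆ μ := by
  have hface : IsFace d n a (ρ ∩ μ) := hρ.inter hμ
  obtain ⟨f, hf0, rfl⟩ := hμ
  have hfα : f α = 0 := le_antisymm (apply_nonpos_of_eventually_mem_NAplusZ f hf0 h)
    (apply_nonneg_of_mem_monoidNface f hf0 hα)
  have hαmem := mem_monoidNface_inter_of_apply_eq_zero f hf0 hα hfα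
  by_contra hns
  exact hint _ hface ⟨Set.inter_subset_left, fun hle => hns fun i hi => (hle hi).2⟩ hαmem

/-- Lemma 4.5: if `α ∈ ℕρ` lies on no proper face of the face `ρ`,
and `β - m • α ∈ ℕA + ℤμ` for all sufficiently large integers `m`, then `ρ ⊆ μ`. -/
theorem face_subset_of_eventually_mem
    (d n : ℕ) (hd : 0 < d) (hn : 0 < n) (a : Fin n → (Fin d → ℤ))
    (ρ : Set (Fin n)) (hρ : IsFace d n a ρ)
    (α : Fin d → ℤ) (hα : α ∈ monoidNface d n a ρ)
    (hint : ∀ σ : Set (Fin n), IsFace d n a σ → σ ⊂ ρ → α ∉ monoidNface d n a σ)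
    (β : Fin d → ℤ) (μ : Set (Fin n)) (hμ : IsFace d n a μ)
    (h : ∃ M : ℕ, ∀ m : ℤ, (M : ℤ) ≤ m → β - m • α ∈ NAplusZ d n a μ) :
    ρ ⊆ μ :=
  face_subset_of_eventually_mem_general d n a ρ hρ α hα hint β μ hμ h
end

section
/- (Combinatorial core of Lemma 4.6) Let ρ be a face of ℕA and let α ∈ ℕρ be such that α ∉ ℕσ for every face σ of ℕA with σ ⊊ ρ. Let β ∈ ℤ^d satisfy β ∉ ℕA + ℤρ, while β ∈ ℕA + ℤμ for every face μ of ℕA with ρ ⊊ μ. Then there exists M ∈ ℕ such that for all integers m ≥ M and every face μ of ℕA, one has β − m·α ∈ ℕA + ℤμ if and only if ρ ⊊ μ. -/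
/-! For `ρ ⊂ μ` the element `α` lies in `ℤμ`, so `β - m • α` stays in `ℕA + ℤμ` together with
`β`; for `μ = ρ` the same argument keeps it outside. For any other face `μ`, cut out by a
functional `f`, the face `ρ ∩ μ` is a proper face of `ρ`, so `α ∉ ℕ(ρ ∩ μ)` forces `f α > 0`;
then `f (β - m • α) < 0` for large `m`, while `f ≥ 0` on `ℕA + ℤμ`. There are only finitely
many faces, so one bound `M` works for all of them. -/

open Filter

variable {d n : ℕ} {a : Fin n → (Fin d → ℤ)}

lemma monoidNface_le_semigroupNA (τ : Set (Fin n)) :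
    monoidNface d n a τ ≤ semigroupNA d n a :=
  AddSubmonoid.closure_mono (Set.image_subset_range a τ)

lemma mem_groupZface_of_mem_monoidNface {τ μ : Set (Fin n)} (hτμ : τ ⊆ μ) {x : Fin d → ℤ}
    (hx : x ∈ monoidNface d n a τ) : x ∈ groupZface d n a μ := by
  have : monoidNface d n a τ ≤ (groupZface d n a μ).toAddSubmonoid :=
    AddSubmonoid.closure_le.mpr
      ((Set.image_mono hτμ).trans (AddSubgroup.subset_closure (k := a '' μ)))
  exact this hx

lemma add_mem_NAplusZ {μ : Set (Fin n)} {x v : Fin d → ℤ} (hx : x ∈ NAplusZ d n a μ)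
    (hv : v ∈ groupZface d n a μ) : x + v ∈ NAplusZ d n a μ := by
  obtain ⟨u, hu, w, hw, rfl⟩ := hx
  exact ⟨u, hu, w + v, add_mem hw hv, add_assoc u w v⟩

lemma map_nonneg_of_mem_semigroupNA {f : (Fin d → ℤ) →ₗ[ℤ] ℤ} (hf : ∀ i, 0 ≤ f (a i))
    {u : Fin d → ℤ} (hu : u ∈ semigroupNA d n a) : 0 ≤ f u := by
  induction hu using AddSubmonoid.closure_induction with
  | mem x hx => obtain ⟨i, rfl⟩ := hx; exact hf i
  | zero => simp
  | add x y _ _ hx hy => rw [map_add]; omega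

lemma map_eq_zero_of_mem_groupZface {f : (Fin d → ℤ) →ₗ[ℤ] ℤ} {μ : Set (Fin n)}
    (hf : ∀ i ∈ μ, f (a i) = 0) {v : Fin d → ℤ} (hv : v ∈ groupZface d n a μ) : f v = 0 := by
  induction hv using AddSubgroup.closure_induction with
  | mem x hx => obtain ⟨i, hi, rfl⟩ := hx; exact hf i hi
  | zero => simp
  | add x y _ _ hx hy => rw [map_add]; omega
  | neg x _ hx => rw [map_neg]; omega

lemma map_nonneg_of_mem_NAplusZ {f : (Fin d → ℤ) →ₗ[ℤ] ℤ} (hf : ∀ i, 0 ≤ f (a i))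
    {μ : Set (Fin n)} (hfμ : ∀ i ∈ μ, f (a i) = 0) {x : Fin d → ℤ}
    (hx : x ∈ NAplusZ d n a μ) : 0 ≤ f x := by
  obtain ⟨u, hu, v, hv, rfl⟩ := hx
  rw [map_add, map_eq_zero_of_mem_groupZface hfμ hv, add_zero]
  exact map_nonneg_of_mem_semigroupNA hf hu

lemma IsFace.inter_s3 {σ τ : Set (Fin n)} (hσ : IsFace d n a σ) (hτ : IsFace d n a τ) :
    IsFace d n a (σ ∩ τ) := by
  obtain ⟨f, hf, rfl⟩ := hσ
  obtain ⟨g, hg, rfl⟩ := hτ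
  refine ⟨f + g, fun i => add_nonneg (hf i) (hg i), Set.ext fun i => ?_⟩
  have := hf i
  have := hg i
  simp only [Set.mem_inter_iff, Set.mem_ofPred_eq, LinearMap.add_apply]
  omega

lemma mem_monoidNface_inter_of_map_eq_zero {f : (Fin d → ℤ) →ₗ[ℤ] ℤ} (hf : ∀ i, 0 ≤ f (a i))
    {τ : Set (Fin n)} {x : Fin d → ℤ} (hx : x ∈ monoidNface d n a τ) (hfx : f x = 0) :
    x ∈ monoidNface d n a (τ ∩ {i | f (a i) = 0}) := by
  induction hx using AddSubmonoid.closure_induction with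
  | mem x hx =>
    obtain ⟨i, hi, rfl⟩ := hx
    exact AddSubmonoid.subset_closure ⟨i, ⟨hi, hfx⟩, rfl⟩
  | zero => exact zero_mem _
  | add x y hxτ hyτ hx hy =>
    have hfx' := map_nonneg_of_mem_semigroupNA hf (monoidNface_le_semigroupNA τ hxτ)
    have hfy' := map_nonneg_of_mem_semigroupNA hf (monoidNface_le_semigroupNA τ hyτ)
    rw [map_add] at hfx
    exact add_mem (hx (by omega)) (hy (by omega))

section

variable {ρ : Set (Fin n)} {α β : Fin d → ℤ}

lemma sub_zsmul_mem_NAplusZ_of_ssubset (hα : α ∈ monoidNface d n a ρ) {μ : Set (Fin n)}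
    (hρμ : ρ ⊂ μ) (hβ : β ∈ NAplusZ d n a μ) (m : ℤ) : β - m • α ∈ NAplusZ d n a μ := by
  rw [sub_eq_add_neg, ← neg_zsmul]
  exact add_mem_NAplusZ hβ (zsmul_mem (mem_groupZface_of_mem_monoidNface hρμ.subset hα) _)

lemma sub_zsmul_notMem_NAplusZ (hα : α ∈ monoidNface d n a ρ) (hβ : β ∉ NAplusZ d n a ρ)
    (m : ℤ) : β - m • α ∉ NAplusZ d n a ρ := fun h => hβ <| by
  simpa using add_mem_NAplusZ h (zsmul_mem (mem_groupZface_of_mem_monoidNface le_rfl hα) m)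

lemma map_pos_of_not_subset (hρ : IsFace d n a ρ) (hα : α ∈ monoidNface d n a ρ)
    (hint : ∀ σ : Set (Fin n), IsFace d n a σ → σ ⊂ ρ → α ∉ monoidNface d n a σ)
    {f : (Fin d → ℤ) →ₗ[ℤ] ℤ} (hf : ∀ i, 0 ≤ f (a i)) (hρf : ¬ρ ⊆ {i | f (a i) = 0}) :
    0 < f α := by
  refine (map_nonneg_of_mem_semigroupNA hf (monoidNface_le_semigroupNA ρ hα)).lt_of_ne' ?_
  intro hfα
  refine hint _ (hρ.inter_s3 ⟨f, hf, rfl⟩) ?_ (mem_monoidNface_inter_of_map_eq_zero hf hα hfα)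
  exact ⟨Set.inter_subset_left, fun h => hρf (h.trans Set.inter_subset_right)⟩

lemma eventually_sub_zsmul_notMem_NAplusZ (hρ : IsFace d n a ρ)
    (hα : α ∈ monoidNface d n a ρ)
    (hint : ∀ σ : Set (Fin n), IsFace d n a σ → σ ⊂ ρ → α ∉ monoidNface d n a σ)
    {μ : Set (Fin n)} (hμ : IsFace d n a μ) (hρμ : ¬ρ ⊆ μ) :
    ∀ᶠ m : ℤ in atTop, β - m • α ∉ NAplusZ d n a μ := by
  obtain ⟨f, hf, rfl⟩ := hμ
  have hfα := map_pos_of_not_subset hρ hα hint hf hρμ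
  filter_upwards [eventually_gt_atTop (f β), eventually_ge_atTop 0] with m hmβ hm0 hmem
  have hnonneg := map_nonneg_of_mem_NAplusZ hf (fun i hi => hi) hmem
  rw [map_sub, map_zsmul, smul_eq_mul] at hnonneg
  nlinarith

lemma eventually_sub_zsmul_mem_NAplusZ_iff (hρ : IsFace d n a ρ)
    (hα : α ∈ monoidNface d n a ρ)
    (hint : ∀ σ : Set (Fin n), IsFace d n a σ → σ ⊂ ρ → α ∉ monoidNface d n a σ)
    (hβρ : β ∉ NAplusZ d n a ρ)
    (hβ : ∀ μ : Set (Fin n), IsFace d n a μ → ρ ⊂ μ → β ∈ NAplusZ d n a μ)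
    {μ : Set (Fin n)} (hμ : IsFace d n a μ) :
    ∀ᶠ m : ℤ in atTop, (β - m • α ∈ NAplusZ d n a μ ↔ ρ ⊂ μ) := by
  by_cases hρμ : ρ ⊂ μ
  · exact .of_forall fun m =>
      iff_of_true (sub_zsmul_mem_NAplusZ_of_ssubset hα hρμ (hβ μ hμ hρμ) m) hρμ
  by_cases hsub : ρ ⊆ μ
  · obtain rfl : ρ = μ := of_not_not fun hne => hρμ (hsub.ssubset_of_ne hne)
    exact .of_forall fun m => iff_of_false (sub_zsmul_notMem_NAplusZ hα hβρ m) hρμ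
  · exact (eventually_sub_zsmul_notMem_NAplusZ hρ hα hint hμ hsub).mono fun m hm =>
      iff_of_false hm hρμ

end

theorem nabla_eventually_eq_strict_star_general
    (d n : ℕ) (a : Fin n → (Fin d → ℤ))
    (ρ : Set (Fin n)) (hρ : IsFace d n a ρ)
    (α : Fin d → ℤ) (hα : α ∈ monoidNface d n a ρ)
    (hint : ∀ σ : Set (Fin n), IsFace d n a σ → σ ⊂ ρ → α ∉ monoidNface d n a σ)
    (β : Fin d → ℤ) (hβρ : β ∉ NAplusZ d n a ρ)
    (hβ : ∀ μ : Set (Fin n), IsFace d n a μ → ρ ⊂ μ → β ∈ NAplusZ d n a μ) :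
    ∃ M : ℕ, ∀ m : ℤ, (M : ℤ) ≤ m → ∀ μ : Set (Fin n), IsFace d n a μ →
      (β - m • α ∈ NAplusZ d n a μ ↔ ρ ⊂ μ) := by
  have hall : ∀ᶠ m : ℤ in atTop, ∀ μ : Set (Fin n), IsFace d n a μ →
      (β - m • α ∈ NAplusZ d n a μ ↔ ρ ⊂ μ) :=
    eventually_all.2 fun μ => eventually_imp_distrib_left.2 fun hμ =>
      eventually_sub_zsmul_mem_NAplusZ_iff hρ hα hint hβρ hβ hμ
  obtain ⟨N, hN⟩ := eventually_atTop.1 hall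
  exact ⟨N.toNat, fun m hm => hN m ((Int.self_le_toNat N).trans hm)⟩

/-- combinatorial core of Lemma 4.6: if `α ∈ ℕρ` lies on no proper face
of the face `ρ`, `β ∉ ℕA + ℤρ`, and `β ∈ ℕA + ℤμ` for every face `μ` strictly
containing `ρ`, then for all sufficiently large integers `m`, the faces `μ` with
`β - m • α ∈ ℕA + ℤμ` are exactly those strictly containing `ρ`. -/
theorem nabla_eventually_eq_strict_star
    (d n : ℕ) (hd : 0 < d) (hn : 0 < n) (a : Fin n → (Fin d → ℤ))
    (ρ : Set (Fin n)) (hρ : IsFace d n a ρ)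
    (α : Fin d → ℤ) (hα : α ∈ monoidNface d n a ρ)
    (hint : ∀ σ : Set (Fin n), IsFace d n a σ → σ ⊂ ρ → α ∉ monoidNface d n a σ)
    (β : Fin d → ℤ) (hβρ : β ∉ NAplusZ d n a ρ)
    (hβ : ∀ μ : Set (Fin n), IsFace d n a μ → ρ ⊂ μ → β ∈ NAplusZ d n a μ) :
    ∃ M : ℕ, ∀ m : ℤ, (M : ℤ) ≤ m → ∀ μ : Set (Fin n), IsFace d n a μ →
      (β - m • α ∈ NAplusZ d n a μ ↔ ρ ⊂ μ) :=
  nabla_eventually_eq_strict_star_general d n a ρ hρ α hα hint β hβρ hβ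
end

section
/- For any subset τ ⊆ {1,…,n}, the ℂ-algebra homomorphism from the monoid algebra ℂ[ℕA] to the monoid algebra ℂ[ℕA + ℤτ] induced by the inclusion of monoids ℕA ⊆ ℕA + ℤτ exhibits ℂ[ℕA + ℤτ] as the localization of ℂ[ℕA] at the multiplicative submonoid generated by the monomials x^{aᵢ} for i ∈ τ. -/
/-- The additive submonoid `ℕA + ℤτ = {u + v : u ∈ ℕA, v ∈ ℤτ}` of `ℤ^d`. -/
def NAplusZsub (d n : ℕ) (a : Fin n → (Fin d → ℤ)) (τ : Set (Fin n)) :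
    AddSubmonoid (Fin d → ℤ) where
  carrier := {x | ∃ u ∈ semigroupNA d n a, ∃ v ∈ groupZface d n a τ, x = u + v}
  zero_mem' := ⟨0, zero_mem _, 0, zero_mem _, by simp⟩
  add_mem' := by
    rintro x y ⟨u, hu, v, hv, rfl⟩ ⟨u', hu', v', hv', rfl⟩
    exact ⟨u + u', add_mem hu hu', v + v', add_mem hv hv', by abel⟩

/-- Each column `a i` belongs to `ℕA`. -/
theorem col_mem_semigroupNA (d n : ℕ) (a : Fin n → (Fin d → ℤ)) (i : Fin n) :
    a i ∈ semigroupNA d n a :=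
  AddSubmonoid.subset_closure ⟨i, rfl⟩

/-- The inclusion of monoids `ℕA ⊆ ℕA + ℤτ`. -/
theorem semigroupNA_le_NAplusZsub (d n : ℕ) (a : Fin n → (Fin d → ℤ))
    (τ : Set (Fin n)) : semigroupNA d n a ≤ NAplusZsub d n a τ :=
  fun x hx => ⟨x, hx, 0, zero_mem _, by simp⟩

/-! Monomials `x^t` with `t` in a submonoid generated by `T` are inverted by the map
`k[M] → k[N]` as soon as the `t ∈ T` become additive units in `N`. If moreover every `z ∈ N`
has the form `m - s` with `m ∈ M` and `s` in the submonoid generated by `T`, then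
`x^z = x^m / x^s`, so every element of `k[N]` is a fraction; and when `M → N` is injective
so is `k[M] → k[N]`, so no denominators are needed to witness equalities. For
`ℕA ⊆ ℕA + ℤτ` both hypotheses hold because every element of `ℤτ` becomes an element of
`ℕ(aᵢ : i ∈ τ)` after adding a suitable element of the latter. -/

theorem AddSubgroup.exists_add_mem_closure_of_mem_closure {G : Type*} [AddCommGroup G]
    {T : Set G} {v : G} (hv : v ∈ AddSubgroup.closure T) :
    ∃ s ∈ AddSubmonoid.closure T, v + s ∈ AddSubmonoid.closure T := by
  induction hv using AddSubgroup.closure_induction with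
  | mem x hx => exact ⟨0, zero_mem _, by simpa using AddSubmonoid.subset_closure hx⟩
  | zero => exact ⟨0, zero_mem _, by simp⟩
  | add x y _ _ ihx ihy =>
    obtain ⟨s, hs, hxs⟩ := ihx
    obtain ⟨t, ht, hyt⟩ := ihy
    refine ⟨s + t, add_mem hs ht, ?_⟩
    rw [add_add_add_comm]
    exact add_mem hxs hyt
  | neg x _ ih =>
    obtain ⟨s, hs, hxs⟩ := ih
    exact ⟨x + s, hxs, by simpa using hs⟩

theorem AddSubmonoid.exists_mem_closure_preimage_coe {G : Type*} [AddMonoid G]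
    {M : AddSubmonoid G} {T : Set G} (hT : T ⊆ M) {x : G} (hx : x ∈ AddSubmonoid.closure T) :
    ∃ y ∈ AddSubmonoid.closure ((↑) ⁻¹' T : Set M), (y : G) = x := by
  have hx' : x ∈ (AddSubmonoid.closure ((↑) ⁻¹' T : Set M)).map M.subtype := by
    rwa [AddMonoidHom.map_mclosure, AddSubmonoid.coe_subtype,
      Set.image_preimage_eq_of_subset (by simpa using hT)]
  simpa using hx'

namespace AddMonoidAlgebra

variable {k M N : Type*} [CommSemiring k] [AddCommMonoid M] [AddCommMonoid N]

theorem of'_mem_closure_image_of' {T : Set M} {s : M} (hs : s ∈ AddSubmonoid.closure T) :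
    of' k M s ∈ Submonoid.closure (of' k M '' T) := by
  induction hs using AddSubmonoid.closure_induction with
  | mem x hx => exact Submonoid.subset_closure (Set.mem_image_of_mem _ hx)
  | zero =>
    rw [of'_apply, ← one_def]
    exact one_mem _
  | add x y _ _ hx hy => simpa [of'_eq_of] using mul_mem hx hy

theorem isUnit_of'_of_isAddUnit {m : M} (hm : IsAddUnit m) : IsUnit (of' k M m) := by
  obtain ⟨m', hm'⟩ := hm.exists_neg
  refine IsUnit.of_mul_eq_one (of' k M m') ?_
  rw [of'_apply, of'_apply, single_mul_single, hm', one_mul, one_def]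

theorem isLocalization_mapDomainRingHom {f : M →+ N} (hf : Function.Injective f) {T : Set M}
    (hT : ∀ t ∈ T, IsAddUnit (f t))
    (hsurj : ∀ z : N, ∃ m, ∃ s ∈ AddSubmonoid.closure T, z + f s = f m) :
    @IsLocalization k[M] _ (Submonoid.closure (of' k M '' T)) k[N] _
      (mapDomainRingHom k f).toAlgebra := by
  let := (mapDomainRingHom k f).toAlgebra
  have map_of' (m : M) : algebraMap k[M] k[N] (of' k M m) = of' k N (f m) := mapDomain_single
  have map_units (y : Submonoid.closure (of' k M '' T)) : IsUnit (algebraMap k[M] k[N] y) := by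
    obtain ⟨y, hy⟩ := y
    induction hy using Submonoid.closure_induction with
    | mem x hx =>
      obtain ⟨t, ht, rfl⟩ := hx
      exact map_of' t ▸ isUnit_of'_of_isAddUnit (hT t ht)
    | one => simp
    | mul x y _ _ hx hy => simpa using hx.mul hy
  refine ⟨map_units, ?_, fun h => ⟨1, by simpa using mapDomain_injective hf h⟩⟩
  -- The range of the induced map out of the abstract localization is additively closed,
  -- so it suffices that it contains every monomial.
  refine (IsLocalization.lift_surjective_iff
    (S := Localization (Submonoid.closure (of' k M '' T))) map_units).mp fun z => ?_
  induction z using induction_linear with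
  | zero => exact ⟨0, map_zero _⟩
  | add x y hx hy =>
    obtain ⟨x', rfl⟩ := hx
    obtain ⟨y', rfl⟩ := hy
    exact ⟨x' + y', map_add _ _ _⟩
  | single z c =>
    obtain ⟨m, s, hs, hzs⟩ := hsurj z
    refine ⟨IsLocalization.mk' _ (single m c) ⟨_, of'_mem_closure_image_of' hs⟩, ?_⟩
    rw [IsLocalization.lift_mk'_spec]
    show mapDomain f (single m c) = mapDomain f (of' k M s) * single z c
    rw [of'_apply, mapDomain_single, mapDomain_single, single_mul_single, one_mul, add_comm, hzs]

end AddMonoidAlgebra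

section NAplusZ

variable {d n : ℕ} {a : Fin n → Fin d → ℤ} {τ : Set (Fin n)}

theorem isAddUnit_of_coe_mem_groupZface {x : NAplusZsub d n a τ}
    (hx : (x : Fin d → ℤ) ∈ groupZface d n a τ) : IsAddUnit x :=
  .of_add_eq_zero ⟨-x, 0, zero_mem _, -x, neg_mem hx, by simp⟩ (Subtype.ext (add_neg_cancel _))

theorem exists_add_inclusion_eq_inclusion (z : NAplusZsub d n a τ) :
    ∃ m : semigroupNA d n a, ∃ s ∈ AddSubmonoid.closure ((↑) ⁻¹' (a '' τ)),
      z + AddSubmonoid.inclusion (semigroupNA_le_NAplusZsub d n a τ) s =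
        AddSubmonoid.inclusion (semigroupNA_le_NAplusZsub d n a τ) m := by
  obtain ⟨_, ⟨u, hu, v, hv, rfl⟩⟩ := z
  have hle : AddSubmonoid.closure (a '' τ) ≤ semigroupNA d n a :=
    AddSubmonoid.closure_mono (Set.image_subset_range a τ)
  obtain ⟨s, hs, hvs⟩ := AddSubgroup.exists_add_mem_closure_of_mem_closure hv
  obtain ⟨s', hs', rfl⟩ := AddSubmonoid.exists_mem_closure_preimage_coe
    (fun _ hx => hle (AddSubmonoid.subset_closure hx)) hs
  refine ⟨⟨u + (v + s'), add_mem hu (hle hvs)⟩, s', hs', Subtype.ext ?_⟩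
  simp only [AddSubmonoid.coe_add, AddSubmonoid.coe_inclusion]
  abel

end NAplusZ

theorem isLocalization_monoidAlgebra_NAplusZ_general
    (d n : ℕ) (a : Fin n → (Fin d → ℤ))
    (τ : Set (Fin n)) :
    @IsLocalization (AddMonoidAlgebra ℂ (semigroupNA d n a)) _
      (Submonoid.closure {x : AddMonoidAlgebra ℂ (semigroupNA d n a) |
        ∃ i ∈ τ, x = AddMonoidAlgebra.of' ℂ (semigroupNA d n a)
          ⟨a i, col_mem_semigroupNA d n a i⟩})
      (AddMonoidAlgebra ℂ (NAplusZsub d n a τ)) _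
      ((AddMonoidAlgebra.mapDomainAlgHom ℂ ℂ
        (AddSubmonoid.inclusion
          (semigroupNA_le_NAplusZsub d n a τ))).toRingHom.toAlgebra) := by
  have hgen : {x : AddMonoidAlgebra ℂ (semigroupNA d n a) | ∃ i ∈ τ,
      x = AddMonoidAlgebra.of' ℂ _ ⟨a i, col_mem_semigroupNA d n a i⟩} =
      AddMonoidAlgebra.of' ℂ _ '' ((↑) ⁻¹' (a '' τ)) := by
    ext x
    constructor
    · rintro ⟨i, hi, rfl⟩
      exact ⟨_, ⟨i, hi, rfl⟩, rfl⟩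
    · rintro ⟨m, ⟨i, hi, him⟩, rfl⟩
      exact ⟨i, hi, congrArg _ (Subtype.ext him).symm⟩
  rw [hgen]
  exact AddMonoidAlgebra.isLocalization_mapDomainRingHom
    (AddSubmonoid.inclusion_injective _)
    (fun t ⟨i, hi, hit⟩ => isAddUnit_of_coe_mem_groupZface
      (hit ▸ AddSubgroup.subset_closure (Set.mem_image_of_mem a hi)))
    exists_add_inclusion_eq_inclusion

/-- the `ℂ`-algebra homomorphism `ℂ[ℕA] → ℂ[ℕA + ℤτ]` induced by the
inclusion of monoids `ℕA ⊆ ℕA + ℤτ` exhibits `ℂ[ℕA + ℤτ]` as the localization of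
`ℂ[ℕA]` at the multiplicative submonoid generated by the monomials `x^(a i)`, `i ∈ τ`. -/
theorem isLocalization_monoidAlgebra_NAplusZ
    (d n : ℕ) (hd : 0 < d) (hn : 0 < n) (a : Fin n → (Fin d → ℤ))
    (τ : Set (Fin n)) :
    @IsLocalization (AddMonoidAlgebra ℂ (semigroupNA d n a)) _
      (Submonoid.closure {x : AddMonoidAlgebra ℂ (semigroupNA d n a) |
        ∃ i ∈ τ, x = AddMonoidAlgebra.of' ℂ (semigroupNA d n a)
          ⟨a i, col_mem_semigroupNA d n a i⟩})
      (AddMonoidAlgebra ℂ (NAplusZsub d n a τ)) _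
      ((AddMonoidAlgebra.mapDomainAlgHom ℂ ℂ
        (AddSubmonoid.inclusion
          (semigroupNA_le_NAplusZsub d n a τ))).toRingHom.toAlgebra) :=
  isLocalization_monoidAlgebra_NAplusZ_general d n a τ
end

section
/- (Combinatorial content of Theorem 3.3) Let β, β′ ∈ ℤ^d. If Ẽ_τ(β) = Ẽ_τ(β′) for every face τ of ℕA, then for every face τ of ℕA one has β ∈ ℕA + ℤτ if and only if β′ ∈ ℕA + ℤτ; that is, ∇(β) = ∇(β′), where ∇(β) denotes the set of faces τ of ℕA with β ∈ ℕA + ℤτ. -/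
/-- The canonical coordinatewise inclusion `ℤ^d ⊆ ℂ^d`. -/
noncomputable def toC (d : ℕ) (v : Fin d → ℤ) : Fin d → ℂ := fun j => (v j : ℂ)

/-- The `ℂ`-linear span of the columns `a i`, `i ∈ τ`, inside `ℂ^d`. -/
noncomputable def spanC (d n : ℕ) (a : Fin n → (Fin d → ℤ)) (τ : Set (Fin n)) :
    Submodule ℂ (Fin d → ℂ) :=
  Submodule.span ℂ ((fun i => toC d (a i)) '' τ)

/-- `Ẽ_τ(β)`: the set of `λ ∈ ℂ^d` lying in the `ℂ`-linear span of the columns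
`a i`, `i ∈ τ`, such that `β - λ` is the image in `ℂ^d` of an element of `ℕA + ℤτ`. -/
def Etilde (d n : ℕ) (a : Fin n → (Fin d → ℤ)) (τ : Set (Fin n))
    (β : Fin d → ℂ) : Set (Fin d → ℂ) :=
  {l | l ∈ spanC d n a τ ∧ ∃ x ∈ NAplusZ d n a τ, β - l = toC d x}

lemma mem_iff_zero_mem_Etilde (d n : ℕ) (a : Fin n → (Fin d → ℤ))
    (τ : Set (Fin n)) (β : Fin d → ℤ) :
    β ∈ NAplusZ d n a τ ↔ (0 : Fin d → ℂ) ∈ Etilde d n a τ (toC d β) := by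
  constructor
  · intro hβ
    exact ⟨Submodule.zero_mem _, β, hβ, by simp⟩
  · rintro ⟨-, x, hx, hxeq⟩
    have : toC d β = toC d x := by simpa using hxeq
    have hbx : β = x := by
      funext j
      have := congrFun this j
      simp only [toC] at this
      exact_mod_cast this
    rwa [hbx]

/-- combinatorial content of Theorem 3.3: if `Ẽ_τ(β) = Ẽ_τ(β')` for all
faces `τ` of `ℕA`, then `∇(β) = ∇(β')`, i.e. for each face `τ`, `β ∈ ℕA + ℤτ` iff
`β' ∈ ℕA + ℤτ`. -/
theorem nabla_eq_of_Etilde_eq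
    (d n : ℕ) (hd : 0 < d) (hn : 0 < n) (a : Fin n → (Fin d → ℤ))
    (β β' : Fin d → ℤ)
    (h : ∀ τ : Set (Fin n), IsFace d n a τ →
      Etilde d n a τ (toC d β) = Etilde d n a τ (toC d β')) :
    ∀ τ : Set (Fin n), IsFace d n a τ →
      (β ∈ NAplusZ d n a τ ↔ β' ∈ NAplusZ d n a τ) := by
  intro τ hτ
  rw [mem_iff_zero_mem_Etilde, mem_iff_zero_mem_Etilde, h τ hτ]
end
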